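/- Let a, x ∈ ℝⁿ have all components nonnegative and suppose x is weakly majorized by a. Then the sign permutation polytope of x is contained in the sign permutation polytope of a: V_{±π(x)} ⊆ V_{±π(a)}. -/

import Mathlib

open Finset

/-- The sum of the `l` largest components of `x : Fin n → ℝ`, defined as the
supremum of sums over index sets of cardinality `l`. -/
noncomputable def sumLargest {n : ℕ} (x : Fin n → ℝ) (l : ℕ) : ℝ :=
  sSup ((fun A : Finset (Fin n) => ∑ i ∈ A, x i) '' {A | A.card = l})

/-- `x` is weakly majorized by `a`: for every `1 ≤ l ≤ n` the sum of the `l`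
largest components of `x` is at most that of `a`. -/
def WeaklyMajorizes {n : ℕ} (x a : Fin n → ℝ) : Prop :=
  ∀ l, 1 ≤ l → l ≤ n → sumLargest x l ≤ sumLargest a l

/-- The set of all signed coordinate permutations of `a`. -/
def signPermSet {n : ℕ} (a : Fin n → ℝ) : Set (Fin n → ℝ) :=
  {y | ∃ (π : Equiv.Perm (Fin n)) (ε : Fin n → ℝ),
    (∀ i, ε i = 1 ∨ ε i = -1) ∧ y = fun i => ε i * a (π i)}

/-! Both hulls are polytopes, so by Hahn–Banach it suffices that for every linear functional `c`
and every vertex `z` of the first, some vertex `y` of the second has `⟨c, z⟩ ≤ ⟨c, y⟩`.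
Choosing signs, `⟨c, z⟩ ≤ ∑ₖ |c|*ₖ x_{σ k}` for a permutation `σ`, while `∑ₖ |c|*ₖ a*ₖ` is
attained at a signed permutation of `a`. Abel summation writes both sums as combinations of
partial sums with the nonnegative weights `|c|*ₖ - |c|*ₖ₊₁`, and weak majorization compares the
partial sums. -/

section Separation

variable {E : Type*} [AddCommGroup E] [Module ℝ E] [TopologicalSpace E] [IsTopologicalAddGroup E]
  [ContinuousSMul ℝ E] [LocallyConvexSpace ℝ E] [T2Space E]

theorem convexHull_subset_convexHull_of_forall_exists_le {s t : Set E} (ht : t.Finite)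
    (h : ∀ f : StrongDual ℝ E, ∀ z ∈ s, ∃ y ∈ t, f z ≤ f y) :
    convexHull ℝ s ⊆ convexHull ℝ t := by
  refine convexHull_min (fun z hz => ?_) (convex_convexHull ℝ t)
  by_contra hzt
  obtain ⟨f, u, hf, hu⟩ := geometric_hahn_banach_closed_point (convex_convexHull ℝ t)
    (ht.isClosed_convexHull ℝ) hzt
  obtain ⟨y, hy, hzy⟩ := h f z hz
  exact (hf y (subset_convexHull ℝ t hy)).not_ge (hu.le.trans hzy)

end Separation

theorem StrongDual.apply_eq_dotProduct {n : ℕ} (f : StrongDual ℝ (Fin n → ℝ)) (v : Fin n → ℝ) :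
    f v = (fun i => f (Pi.single i 1)) ⬝ᵥ v := by
  conv_lhs => rw [pi_eq_sum_univ' v]
  simp only [map_sum, map_smul, smul_eq_mul, dotProduct, mul_comm]

theorem Tuple.exists_perm_antitone_comp {n : ℕ} {α : Type*} [LinearOrder α] (f : Fin n → α) :
    ∃ σ : Equiv.Perm (Fin n), Antitone (f ∘ σ) :=
  ⟨Tuple.sort (OrderDual.toDual ∘ f), Tuple.monotone_sort (OrderDual.toDual ∘ f)⟩

theorem sum_range_mul_le_of_antitone_of_sum_range_le {d v w : ℕ → ℝ} (hd : Antitone d)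
    (hd₀ : ∀ k, 0 ≤ d k) (n : ℕ)
    (hvw : ∀ l ≤ n, ∑ k ∈ range l, v k ≤ ∑ k ∈ range l, w k) :
    ∑ k ∈ range n, d k * v k ≤ ∑ k ∈ range n, d k * w k := by
  have hv := sum_range_by_parts d v n
  have hw := sum_range_by_parts d w n
  simp only [smul_eq_mul] at hv hw
  rw [hv, hw]
  refine sub_le_sub (mul_le_mul_of_nonneg_left (hvw n le_rfl) (hd₀ _)) (sum_le_sum fun i hi => ?_)
  exact mul_le_mul_of_nonpos_left (hvw _ (by grind)) (sub_nonpos.mpr (hd i.le_succ))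

theorem sum_mul_le_of_antitone_of_prefix_sum_le {n : ℕ} {d v w : Fin n → ℝ} (hd : Antitone d)
    (hd₀ : 0 ≤ d)
    (hvw : ∀ l (hl : l ≤ n), ∑ k : Fin l, v (Fin.castLE hl k) ≤ ∑ k : Fin l, w (Fin.castLE hl k)) :
    ∑ i, d i * v i ≤ ∑ i, d i * w i := by
  -- padding by zero keeps `d` antitone and nonnegative on all of `ℕ`
  let extend : (Fin n → ℝ) → ℕ → ℝ := fun f k => if h : k < n then f ⟨k, h⟩ else 0
  have sum_mul_eq (f g : Fin n → ℝ) :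
      ∑ i, f i * g i = ∑ k ∈ range n, extend f k * extend g k := by
    rw [sum_fin_eq_sum_range]
    exact sum_congr rfl fun k hk => by simp [extend, mem_range.mp hk]
  have prefix_sum_eq (f : Fin n → ℝ) (l : ℕ) (hl : l ≤ n) :
      ∑ k : Fin l, f (Fin.castLE hl k) = ∑ k ∈ range l, extend f k := by
    rw [← Fin.sum_univ_eq_sum_range]
    exact sum_congr rfl fun k _ => by simp [extend, k.isLt.trans_le hl, Fin.castLE]
  rw [sum_mul_eq, sum_mul_eq]
  refine sum_range_mul_le_of_antitone_of_sum_range_le (fun j k hjk => ?_) (fun k => ?_) n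
    fun l hl => by simpa only [prefix_sum_eq _ l hl] using hvw l hl
  · simp only [extend]
    split_ifs with hk hj hj
    · exact hd (Fin.mk_le_mk.mpr hjk)
    · omega
    · exact hd₀ _
    · exact le_rfl
  · simp only [extend]
    split_ifs
    exacts [hd₀ _, le_rfl]

theorem Fin.val_le_of_strictMono {l n : ℕ} {f : Fin l → Fin n} (hf : StrictMono f) (k : Fin l) :
    (k : ℕ) ≤ f k := by
  obtain ⟨k, hk⟩ := k
  induction k with
  | zero => exact Nat.zero_le _
  | succ k ih => exact (ih (by omega)).trans_lt (hf (Fin.mk_lt_mk.mpr k.lt_succ_self))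

theorem sum_le_prefix_sum_of_antitone {n l : ℕ} {g : Fin n → ℝ} (hg : Antitone g) (hl : l ≤ n)
    {B : Finset (Fin n)} (hB : #B = l) :
    ∑ i ∈ B, g i ≤ ∑ k : Fin l, g (Fin.castLE hl k) := by
  -- the `k`-th smallest element of `B` has index at least `k`
  rw [← B.map_orderEmbOfFin_univ hB, sum_map]
  exact sum_le_sum fun k _ => hg (Fin.val_le_of_strictMono (B.orderEmbOfFin hB).strictMono k)

theorem sum_le_sumLargest {n l : ℕ} (x : Fin n → ℝ) {B : Finset (Fin n)} (hB : #B = l) :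
    ∑ i ∈ B, x i ≤ sumLargest x l :=
  le_csSup ((Set.toFinite _).image _).bddAbove ⟨B, hB, rfl⟩

theorem prefix_sum_le_sumLargest {n l : ℕ} (x : Fin n → ℝ) (σ : Equiv.Perm (Fin n)) (hl : l ≤ n) :
    ∑ k : Fin l, x (σ (Fin.castLE hl k)) ≤ sumLargest x l := by
  simpa [sum_map] using sum_le_sumLargest x (B := univ.map ((Fin.castLEEmb hl).trans σ.toEmbedding))
    (by simp)

theorem sumLargest_le_prefix_sum_of_antitone {n l : ℕ} {a : Fin n → ℝ} {ρ : Equiv.Perm (Fin n)}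
    (hρ : Antitone (a ∘ ρ)) (hl : l ≤ n) :
    sumLargest a l ≤ ∑ k : Fin l, a (ρ (Fin.castLE hl k)) := by
  obtain ⟨B₀, -, hB₀⟩ := exists_subset_card_eq (s := (univ : Finset (Fin n))) (by simpa using hl)
  refine csSup_le ⟨_, B₀, hB₀, rfl⟩ ?_
  rintro _ ⟨B, hB, rfl⟩
  calc ∑ i ∈ B, a i = ∑ i ∈ B.map ρ.symm.toEmbedding, (a ∘ ρ) i := by simp [sum_map]
    _ ≤ _ := sum_le_prefix_sum_of_antitone hρ hl (by simpa using hB)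

theorem WeaklyMajorizes.sum_mul_le {n : ℕ} {x a : Fin n → ℝ} (hxa : WeaklyMajorizes x a)
    {d : Fin n → ℝ} (hd : Antitone d) (hd₀ : 0 ≤ d) (σ : Equiv.Perm (Fin n))
    {ρ : Equiv.Perm (Fin n)} (hρ : Antitone (a ∘ ρ)) :
    ∑ i, d i * x (σ i) ≤ ∑ i, d i * a (ρ i) := by
  refine sum_mul_le_of_antitone_of_prefix_sum_le hd hd₀ fun l hl => ?_
  rcases Nat.eq_zero_or_pos l with rfl | hl₀
  · simp
  calc ∑ k : Fin l, x (σ (Fin.castLE hl k)) ≤ sumLargest x l := prefix_sum_le_sumLargest x σ hl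
    _ ≤ sumLargest a l := hxa l hl₀ hl
    _ ≤ ∑ k : Fin l, a (ρ (Fin.castLE hl k)) := sumLargest_le_prefix_sum_of_antitone hρ hl

theorem finite_signPermSet {n : ℕ} (a : Fin n → ℝ) : (signPermSet a).Finite := by
  refine (Set.Finite.pi (t := fun _ => Set.range a ∪ Set.range (-a))
    fun _ => (Set.finite_range a).union (Set.finite_range _)).subset ?_
  rintro _ ⟨π, ε, hε, rfl⟩ i -
  rcases hε i with h | h <;> simp [h]

theorem exists_mem_signPermSet_dotProduct_le {n : ℕ} {x a : Fin n → ℝ} (hx : 0 ≤ x)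
    (hxa : WeaklyMajorizes x a) (c : Fin n → ℝ) {z : Fin n → ℝ} (hz : z ∈ signPermSet x) :
    ∃ y ∈ signPermSet a, c ⬝ᵥ z ≤ c ⬝ᵥ y := by
  obtain ⟨π, ε, hε, rfl⟩ := hz
  obtain ⟨τ, hτ⟩ := Tuple.exists_perm_antitone_comp fun i => |c i|
  obtain ⟨ρ, hρ⟩ := Tuple.exists_perm_antitone_comp a
  let s : Fin n → ℝ := fun i => if 0 ≤ c i then 1 else -1
  have hcs (i : Fin n) : c i * s i = |c i| := by
    by_cases h : 0 ≤ c i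
    · simp [s, h, abs_of_nonneg h]
    · simp [s, h, abs_of_neg (not_le.mp h)]
  refine ⟨fun i => s i * a (ρ (τ.symm i)),
    ⟨τ.symm.trans ρ, s, fun i => by by_cases h : 0 ≤ c i <;> simp [s, h], rfl⟩, ?_⟩
  calc c ⬝ᵥ (fun i => ε i * x (π i)) ≤ ∑ i, |c i| * x (π i) := by
        refine sum_le_sum fun i _ => ?_
        rw [← mul_assoc]
        refine mul_le_mul_of_nonneg_right ?_ (hx _)
        rcases hε i with h | h <;> simp [h, le_abs_self, neg_le_abs]
    _ = ∑ k, |c (τ k)| * x ((τ.trans π) k) := (Equiv.sum_comp τ _).symm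
    _ ≤ ∑ k, |c (τ k)| * a (ρ k) := hxa.sum_mul_le hτ (fun k => abs_nonneg _) _ hρ
    _ = ∑ i, |c i| * a (ρ (τ.symm i)) := by
        rw [← Equiv.sum_comp τ (fun i => |c i| * a (ρ (τ.symm i)))]
        simp only [Equiv.symm_apply_apply]
    _ = c ⬝ᵥ fun i => s i * a (ρ (τ.symm i)) := by
        simp only [dotProduct, ← mul_assoc, hcs]

theorem signPermPolytope_subset_general (n : ℕ) (a x : Fin n → ℝ)
    (hx : ∀ i, 0 ≤ x i) (hxa : WeaklyMajorizes x a) :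
    convexHull ℝ (signPermSet x) ⊆ convexHull ℝ (signPermSet a) := by
  refine convexHull_subset_convexHull_of_forall_exists_le (finite_signPermSet a) fun f z hz => ?_
  obtain ⟨y, hy, hzy⟩ := exists_mem_signPermSet_dotProduct_le hx hxa (fun i => f (Pi.single i 1)) hz
  exact ⟨y, hy, by rwa [f.apply_eq_dotProduct z, f.apply_eq_dotProduct y]⟩

/-- If `x` is weakly majorized by `a` (both with nonnegative components), then the
sign permutation polytope of `x` is contained in that of `a`. -/
theorem signPermPolytope_subset (n : ℕ) (a x : Fin n → ℝ)
    (ha : ∀ i, 0 ≤ a i) (hx : ∀ i, 0 ≤ x i) (hxa : WeaklyMajorizes x a) :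
    convexHull ℝ (signPermSet x) ⊆ convexHull ℝ (signPermSet a) :=
  signPermPolytope_subset_general n a x hx hxa
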